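/- arXiv:1401.7203 — 2 statements merged into one kernel-verified Lean document; each statement's English description precedes it below -/
import Mathlib

section
/- If languages L1 and L2 over a finite alphabet X are regular, then the insertion language L1 ← L2 := { z'wz'' : z'z'' ∈ L1, w ∈ L2 } is regular. -/
/-!
Group the insertion points by the left quotient `A = z'⁻¹L₁` of the prefix: then
`L₁ ← L₂ = ⋃_A {z' | z'⁻¹L₁ = A} · L₂ · A`, a union over finitely many `A` by Myhill–Nerode.
Regularity is preserved by left quotients, by passing to such a Nerode class, by concatenation and
by finite unions, each time because the left quotients of the new language are a function of
finitely many left quotients of the old ones.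
-/

/-- The insertion of language `L₂` into language `L₁`: all words obtained by
inserting a word of `L₂` somewhere inside a word of `L₁`. -/
def insertLang {X : Type*} (L₁ L₂ : Language X) : Language X :=
  {x | ∃ z' z'' w : List X, z' ++ z'' ∈ L₁ ∧ w ∈ L₂ ∧ x = z' ++ w ++ z''}

namespace Language

variable {α : Type*} {L L₁ L₂ : Language α}

def nerodeClass (L A : Language α) : Language α := {x | L.leftQuotient x = A}

@[simp]
theorem mem_nerodeClass {A : Language α} {x : List α} :
    x ∈ L.nerodeClass A ↔ L.leftQuotient x = A := Iff.rfl

theorem IsRegular.of_leftQuotient_eq_comp {β : Type*} (F : β → Language α) (g : List α → β)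
    (hg : (Set.range g).Finite) (h : L.leftQuotient = F ∘ g) : L.IsRegular := by
  apply IsRegular.of_finite_range_leftQuotient
  rw [h, Set.range_comp]
  exact hg.image F

theorem IsRegular.leftQuotient (h : L.IsRegular) (x : List α) :
    (L.leftQuotient x).IsRegular :=
  .of_finite_range_leftQuotient <| h.finite_range_leftQuotient.subset <| by
    rintro _ ⟨y, rfl⟩
    exact ⟨x ++ y, leftQuotient_append L x y⟩

theorem IsRegular.nerodeClass (h : L.IsRegular) (A : Language α) :
    (L.nerodeClass A).IsRegular := by
  refine .of_leftQuotient_eq_comp (fun B ↦ B.nerodeClass A) L.leftQuotient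
    h.finite_range_leftQuotient (funext fun x ↦ ?_)
  ext y
  simp [leftQuotient_append]

theorem IsRegular.iSup {ι : Type*} [Finite ι] {L : ι → Language α}
    (h : ∀ i, (L i).IsRegular) : (⨆ i, L i).IsRegular := by
  refine .of_leftQuotient_eq_comp (fun Q ↦ ⨆ i, Q i) (fun x i ↦ (L i).leftQuotient x)
    ((Set.Finite.pi' fun i ↦ (h i).finite_range_leftQuotient).subset ?_) (funext fun x ↦ ?_)
  · rintro _ ⟨x, rfl⟩ i
    exact ⟨x, rfl⟩
  · ext y
    simp [mem_iSup]

theorem leftQuotient_mul (x : List α) :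
    (L₁ * L₂).leftQuotient x =
      L₁.leftQuotient x * L₂ + sSup (L₂.leftQuotient '' {v | ∃ u ∈ L₁, u ++ v = x}) := by
  ext y
  simp only [sSup_image, mem_leftQuotient, mem_mul, mem_add, mem_iSup, Set.mem_ofPred_eq]
  constructor
  · rintro ⟨a, ha, b, hb, hab⟩
    rcases List.append_eq_append_iff.mp hab with ⟨v, rfl, rfl⟩ | ⟨a', rfl, rfl⟩
    · exact .inr ⟨v, ⟨a, ha, rfl⟩, hb⟩
    · exact .inl ⟨a', ha, b, hb, rfl⟩
  · rintro (⟨a', ha', b, hb, rfl⟩ | ⟨v, ⟨u, hu, rfl⟩, hv⟩)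
    · exact ⟨x ++ a', ha', b, hb, List.append_assoc ..⟩
    · exact ⟨u, hu, v ++ y, hv, (List.append_assoc ..).symm⟩

theorem IsRegular.mul (h₁ : L₁.IsRegular) (h₂ : L₂.IsRegular) : (L₁ * L₂).IsRegular := by
  refine .of_leftQuotient_eq_comp (fun p ↦ p.1 * L₂ + sSup p.2)
    (fun x ↦ (L₁.leftQuotient x, L₂.leftQuotient '' {v | ∃ u ∈ L₁, u ++ v = x}))
    ((h₁.finite_range_leftQuotient.prod h₂.finite_range_leftQuotient.powerset).subset ?_)
    (funext leftQuotient_mul)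
  rintro _ ⟨x, rfl⟩
  exact ⟨⟨x, rfl⟩, Set.image_subset_range _ _⟩

end Language

theorem insertLang_eq_iSup_nerodeClass {α : Type*} (L₁ L₂ : Language α) :
    insertLang L₁ L₂ = ⨆ A : Set.range L₁.leftQuotient, L₁.nerodeClass A * L₂ * A := by
  ext x
  simp only [insertLang, Language.mem_iSup, Language.mem_mul, Language.mem_nerodeClass,
    Subtype.exists, Set.mem_range]
  constructor
  · rintro ⟨z', z'', w, hz, hw, rfl⟩
    exact ⟨_, ⟨z', rfl⟩, z' ++ w, ⟨z', rfl, w, hw, rfl⟩, z'', hz, rfl⟩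
  · rintro ⟨_, _, _, ⟨z', rfl, w, hw, rfl⟩, z'', hz, rfl⟩
    exact ⟨z', z'', w, hz, hw, rfl⟩

theorem insertLang_isRegular_general {X : Type*} (L₁ L₂ : Language X)
    (h₁ : L₁.IsRegular) (h₂ : L₂.IsRegular) : (insertLang L₁ L₂).IsRegular := by
  have := h₁.finite_range_leftQuotient.to_subtype
  rw [insertLang_eq_iSup_nerodeClass]
  refine Language.IsRegular.iSup ?_
  rintro ⟨_, x, rfl⟩
  exact ((h₁.nerodeClass _).mul h₂).mul (h₁.leftQuotient x)

theorem insertLang_isRegular {X : Type*} [Fintype X] (L₁ L₂ : Language X)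
    (h₁ : L₁.IsRegular) (h₂ : L₂.IsRegular) : (insertLang L₁ L₂).IsRegular :=
  insertLang_isRegular_general L₁ L₂ h₁ h₂
end

section
/- Let G be a recursively presented group ⟨X | R⟩ such that the set of shortlex conjugacy normal forms ConjSL(G,X) is a recursive subset of X*. Then G has solvable conjugacy problem. -/
/-!
Conjugacy of words is recursively enumerable: search for a word `y` with `y u = v y` in `G`,
which the r.e. word problem confirms (inverse-closedness of the generators turns equality of
words into triviality of a word). Non-conjugacy is recursively enumerable too, since every
conjugacy class has exactly one shortlex-least word: `u` and `v` are non-conjugate iff there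
are distinct conjugacy normal forms `w ~ u` and `w' ~ v`, and such a pair can be searched for.
Post's theorem then makes conjugacy decidable.
-/

/-- The image in `G` of a word over the generating alphabet. -/
def wordProd {X G : Type*} [Group G] (f : X → G) (w : List X) : G :=
  (w.map f).prod

/-- The shortlex order on words over the ordered alphabet `Fin n`. -/
def ShortLexLE {n : ℕ} (w v : List (Fin n)) : Prop :=
  w.length < v.length ∨ (w.length = v.length ∧ (w = v ∨ List.Lex (· < ·) w v))

/-- `w` is the shortlex conjugacy normal form of its conjugacy class: it is
shortlex-least among all words representing elements conjugate to `π(w)`. -/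
def IsConjSLNormalForm {n : ℕ} {G : Type*} [Group G] (f : Fin n → G)
    (w : List (Fin n)) : Prop :=
  ∀ v : List (Fin n), IsConj (wordProd f v) (wordProd f w) → ShortLexLE w v

open Encodable

theorem Part.assert_some_dom {σ : Type*} {p : Prop} (x : σ) :
    (Part.assert p fun _ => Part.some x).Dom ↔ p :=
  ⟨fun h => h.1, fun h => ⟨h, trivial⟩⟩

namespace REPred

variable {α β : Type*} [Primcodable α] [Primcodable β]

protected theorem comp {p : β → Prop} (hp : REPred p) {g : α → β} (hg : Computable g) :
    REPred fun a => p (g a) :=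
  Partrec.comp hp hg

protected theorem and {p q : α → Prop} (hp : REPred p) (hq : REPred q) :
    REPred fun a => p a ∧ q a := by
  have hq' : Partrec₂ fun (a : α) (_ : Unit) => Part.assert (q a) fun _ => Part.some () :=
    Partrec.comp hq Computable.fst
  refine (Partrec.bind hp hq').dom_re.of_eq fun a => ?_
  simp only [Part.bind_dom, Part.assert_some_dom, exists_prop]

theorem exists_of_computable₂ {q : α → β → Bool} (hq : Computable₂ q) :
    REPred fun a => ∃ b, q a b = true := by
  have hsearch : Computable₂ fun (a : α) (n : ℕ) =>
      (decode n : Option β).bind fun b => bif q a b then some () else none :=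
    Computable.option_bind (Computable.decode.comp Computable.snd)
      (Computable.cond (hq.comp (Computable.fst.comp Computable.fst) Computable.snd)
        (Computable.const _) (Computable.const _)).to₂
  refine (Partrec.rfindOpt hsearch).dom_re.of_eq fun a => ?_
  rw [Nat.rfindOpt_dom]
  constructor
  · rintro ⟨n, u, hu⟩
    obtain ⟨b, -, hb⟩ := Option.bind_eq_some_iff.1 hu
    exact ⟨b, by cases h : q a b <;> simp_all⟩
  · rintro ⟨b, hb⟩
    exact ⟨encode b, (), by simp [hb]⟩

theorem exists_computable₂ {p : α → Prop} (hp : REPred p) :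
    ∃ q : α → ℕ → Bool, Computable₂ q ∧ ∀ a, p a ↔ ∃ k, q a k = true := by
  obtain ⟨c, hc⟩ := Nat.Partrec.Code.exists_code.1 hp
  refine ⟨fun a k => (Nat.Partrec.Code.evaln k c (encode a)).isSome, ?_, fun a => ?_⟩
  · exact (Primrec.option_isSome.comp (Nat.Partrec.Code.primrec_evaln.comp
      ((Primrec.snd.pair (Primrec.const c)).pair (Primrec.encode.comp Primrec.fst)))).to_comp
  · have hdom : p a ↔ (Nat.Partrec.Code.eval c (encode a)).Dom := by
      rw [hc]; simp [encodek, Part.assert_some_dom]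
    simp only [hdom, Part.dom_iff_mem, Nat.Partrec.Code.evaln_complete, Option.isSome_iff_exists]
    exact exists_comm

theorem exists_of_prod {p : α × β → Prop} (hp : REPred p) :
    REPred fun a => ∃ b, p (a, b) := by
  obtain ⟨q, hq, hpq⟩ := hp.exists_computable₂
  refine (exists_of_computable₂ (q := fun a (bk : β × ℕ) => q (a, bk.1) bk.2)
    (hq.comp (Computable.fst.pair (Computable.fst.comp Computable.snd))
      (Computable.snd.comp Computable.snd))).of_eq fun a => ?_
  simp [hpq, Prod.exists]

end REPred

section Words

variable {X G : Type*} [Group G] (f : X → G)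

@[simp]
theorem wordProd_append (u v : List X) : wordProd f (u ++ v) = wordProd f u * wordProd f v := by
  simp [wordProd]

theorem wordProd_reverse_map {ι : X → X} (hι : ∀ x, f (ι x) = (f x)⁻¹) (w : List X) :
    wordProd f (w.reverse.map ι) = (wordProd f w)⁻¹ := by
  simp [wordProd, List.prod_inv_reverse, hι, Function.comp_def]

theorem wordProd_surjective (hinv : ∀ x, ∃ y, f y = (f x)⁻¹)
    (hgen : Subgroup.closure (Set.range f) = ⊤) : Function.Surjective (wordProd f) := by
  choose ι hι using hinv
  intro a
  have ha : a ∈ Subgroup.closure (Set.range f) := hgen ▸ Subgroup.mem_top a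
  induction ha using Subgroup.closure_induction with
  | mem _ hx =>
    obtain ⟨x, rfl⟩ := hx
    exact ⟨[x], by simp [wordProd]⟩
  | one => exact ⟨[], by simp [wordProd]⟩
  | mul _ _ _ _ hu hv =>
    obtain ⟨u, rfl⟩ := hu
    obtain ⟨v, rfl⟩ := hv
    exact ⟨u ++ v, wordProd_append f u v⟩
  | inv _ _ hu =>
    obtain ⟨u, rfl⟩ := hu
    exact ⟨u.reverse.map ι, wordProd_reverse_map f hι u⟩

theorem isConj_wordProd_iff (hinv : ∀ x, ∃ y, f y = (f x)⁻¹)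
    (hgen : Subgroup.closure (Set.range f) = ⊤) (u v : List X) :
    IsConj (wordProd f u) (wordProd f v) ↔ ∃ y, wordProd f (y ++ u) = wordProd f (v ++ y) := by
  simp only [isConj_iff, mul_inv_eq_iff_eq_mul, wordProd_append,
    (wordProd_surjective f hinv hgen).exists]

variable [Primcodable X] [Finite X]

theorem rePred_wordProd_eq (hinv : ∀ x, ∃ y, f y = (f x)⁻¹)
    (hre : REPred fun w : List X => wordProd f w = 1) :
    REPred fun p : List X × List X => wordProd f p.1 = wordProd f p.2 := by
  choose ι hι using hinv
  have hcomp : Computable fun p : List X × List X => p.1 ++ p.2.reverse.map ι := by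
    have hinvWord : Primrec fun w : List X => w.reverse.map ι :=
      Primrec.list_map Primrec.list_reverse ((Primrec.dom_finite ι).comp Primrec.snd).to₂
    exact (Primrec.list_append.comp Primrec.fst (hinvWord.comp Primrec.snd)).to_comp
  refine (hre.comp hcomp).of_eq fun p => ?_
  rw [wordProd_append, wordProd_reverse_map f hι, mul_inv_eq_one]

theorem rePred_isConj_wordProd (hinv : ∀ x, ∃ y, f y = (f x)⁻¹)
    (hgen : Subgroup.closure (Set.range f) = ⊤)
    (hre : REPred fun w : List X => wordProd f w = 1) :
    REPred fun p : List X × List X => IsConj (wordProd f p.1) (wordProd f p.2) := by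
  have hcomp : Computable fun x : (List X × List X) × List X => (x.2 ++ x.1.1, x.1.2 ++ x.2) :=
    ((Computable.list_append.comp Computable.snd (Computable.fst.comp Computable.fst)).pair
      (Computable.list_append.comp (Computable.snd.comp Computable.fst) Computable.snd))
  refine ((rePred_wordProd_eq f hinv hre).comp hcomp).exists_of_prod.of_eq fun p => ?_
  exact (isConj_wordProd_iff f hinv hgen p.1 p.2).symm

end Words

section ConjugacyNormalForms

variable {n : ℕ}

theorem ShortLexLE.antisymm {w v : List (Fin n)} (hwv : ShortLexLE w v) (hvw : ShortLexLE v w) :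
    w = v := by
  rcases hwv with hlt | ⟨hlen, rfl | hwv⟩
  · rcases hvw with h | ⟨h, -⟩ <;> omega
  · rfl
  · rcases hvw with h | ⟨-, h | hvw⟩
    · omega
    · exact h.symm
    · exact absurd hvw (asymm hwv)

theorem exists_forall_shortLexLE {S : Set (List (Fin n))} (hS : S.Nonempty) :
    ∃ w ∈ S, ∀ v ∈ S, ShortLexLE w v := by
  obtain ⟨u, hu, hshortest⟩ := (measure List.length).wf.has_min S hS
  have hfin : {v ∈ S | v.length = u.length}.Finite :=
    (List.finite_length_eq (Fin n) u.length).subset fun v hv => hv.2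
  obtain ⟨w, ⟨hwS, hwlen⟩, hwmin⟩ := Set.exists_min_image _ id hfin ⟨u, hu, rfl⟩
  refine ⟨w, hwS, fun v hv => ?_⟩
  have hlen : u.length ≤ v.length := not_lt.1 (hshortest v hv)
  rcases hlen.lt_or_eq with hlt | heq
  · exact .inl (hwlen ▸ hlt)
  · exact .inr ⟨hwlen.trans heq, (hwmin v ⟨hv, heq.symm⟩).eq_or_lt⟩

theorem exists_isConjSLNormalForm {G : Type*} [Group G] (f : Fin n → G) (u : List (Fin n)) :
    ∃ w, IsConjSLNormalForm f w ∧ IsConj (wordProd f w) (wordProd f u) := by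
  obtain ⟨w, hw, hmin⟩ :=
    exists_forall_shortLexLE (S := {v | IsConj (wordProd f v) (wordProd f u)}) ⟨u, .refl _⟩
  exact ⟨w, fun v hv => hmin v (hv.trans hw), hw⟩

theorem IsConjSLNormalForm.eq_of_isConj {G : Type*} [Group G] {f : Fin n → G}
    {w w' : List (Fin n)} (hw : IsConjSLNormalForm f w) (hw' : IsConjSLNormalForm f w')
    (h : IsConj (wordProd f w) (wordProd f w')) : w = w' :=
  (hw w' h.symm).antisymm (hw' w h)

theorem not_isConj_wordProd_iff {G : Type*} [Group G] (f : Fin n → G) (u v : List (Fin n)) :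
    ¬IsConj (wordProd f u) (wordProd f v) ↔
      ∃ w w' : List (Fin n), IsConjSLNormalForm f w ∧ IsConjSLNormalForm f w' ∧ w ≠ w' ∧
        IsConj (wordProd f u) (wordProd f w) ∧ IsConj (wordProd f v) (wordProd f w') := by
  constructor
  · intro hnc
    obtain ⟨w, hw, hwu⟩ := exists_isConjSLNormalForm f u
    obtain ⟨w', hw', hwv⟩ := exists_isConjSLNormalForm f v
    refine ⟨w, w', hw, hw', ?_, hwu.symm, hwv.symm⟩
    rintro rfl
    exact hnc (hwu.symm.trans hwv)
  · rintro ⟨w, w', hw, hw', hne, hwu, hwv⟩ huv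
    exact hne (hw.eq_of_isConj hw' ((hwu.symm.trans huv).trans hwv))

theorem rePred_not_isConj_wordProd {G : Type*} [Group G] (f : Fin n → G)
    (hnf : REPred fun w : List (Fin n) => IsConjSLNormalForm f w)
    (hconj : REPred fun p : List (Fin n) × List (Fin n) =>
      IsConj (wordProd f p.1) (wordProd f p.2)) :
    REPred fun p : List (Fin n) × List (Fin n) => ¬IsConj (wordProd f p.1) (wordProd f p.2) := by
  have hne : REPred fun x : List (Fin n) × List (Fin n) => x.1 ≠ x.2 :=
    (PrimrecPred.computablePred Primrec.eq).not.to_re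
  have hsearch : REPred fun x : (List (Fin n) × List (Fin n)) × (List (Fin n) × List (Fin n)) =>
      IsConjSLNormalForm f x.2.1 ∧ IsConjSLNormalForm f x.2.2 ∧ x.2.1 ≠ x.2.2 ∧
        IsConj (wordProd f x.1.1) (wordProd f x.2.1) ∧
          IsConj (wordProd f x.1.2) (wordProd f x.2.2) :=
    ((hnf.comp (Computable.fst.comp Computable.snd)).and <|
      (hnf.comp (Computable.snd.comp Computable.snd)).and <|
      (hne.comp Computable.snd).and <|
      (hconj.comp ((Computable.fst.comp Computable.fst).pair
        (Computable.fst.comp Computable.snd))).and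
      (hconj.comp ((Computable.snd.comp Computable.fst).pair
        (Computable.snd.comp Computable.snd)))).of_eq fun _ => Iff.rfl
  refine hsearch.exists_of_prod.of_eq fun p => ?_
  rw [not_isConj_wordProd_iff, Prod.exists]

end ConjugacyNormalForms

/-- A recursively presented group whose set of shortlex conjugacy normal forms
is recursive has solvable conjugacy problem. -/
theorem conjugacyProblem_solvable_of_conjSL_recursive {n : ℕ} {G : Type*} [Group G]
    (f : Fin n → G) (hinv : ∀ x : Fin n, ∃ y : Fin n, f y = (f x)⁻¹)
    (hgen : Subgroup.closure (Set.range f) = ⊤)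
    (hre : REPred fun w : List (Fin n) => wordProd f w = 1)
    (hrec : ComputablePred fun w : List (Fin n) => IsConjSLNormalForm f w) :
    ComputablePred fun p : List (Fin n) × List (Fin n) =>
      IsConj (wordProd f p.1) (wordProd f p.2) := by
  have hconj := rePred_isConj_wordProd f hinv hgen hre
  exact ComputablePred.computable_iff_re_compl_re'.2
    ⟨hconj, rePred_not_isConj_wordProd f hrec.to_re hconj⟩
end
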